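/- A finite simple graph G is edge-critical if and only if β_0( G \ (N_G[t_i] ∪ N_G[t_j]) ) = β_0(G) − 1 for every edge {t_i, t_j} of G, where G \ A denotes the induced subgraph of G on V(G) \ A and N_G[v] is the closed neighborhood of v (v together with its adjacent vertices). -/

import Mathlib

open MvPolynomial

attribute [local instance] Classical.propDecidable

/-- The v-number of a graded ideal `I` of a polynomial ring: the least `d ≥ 1` such that
there is a homogeneous polynomial `f` of degree `d` and an associated prime `p` of `S/I`
with `(I : f) = p`; by convention it is `0` when `I` is the ideal generated by the variables. -/
noncomputable def vNumber {K : Type*} [Field K] {σ : Type*}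
    (I : Ideal (MvPolynomial σ K)) : ℕ :=
  if I = Ideal.span (Set.range (X : σ → MvPolynomial σ K)) then 0
  else sInf {d : ℕ | 1 ≤ d ∧ ∃ f : MvPolynomial σ K, f.IsHomogeneous d ∧
    ∃ p ∈ associatedPrimes (MvPolynomial σ K) (MvPolynomial σ K ⧸ I),
      Submodule.colon I (Ideal.span {f}) = p}

/-- A squarefree monomial ideal: an ideal generated by squarefree monomials,
i.e. by products of distinct variables. -/
def IsSquarefreeMonomialIdeal {K : Type*} [Field K] {σ : Type*}
    (I : Ideal (MvPolynomial σ K)) : Prop :=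
  ∃ E : Set (Finset σ), I = Ideal.span ((fun e : Finset σ => ∏ i ∈ e, X i) '' E)

/-- A clutter on the vertex set `Fin s`: a family of edges, none of which contains another. -/
structure Clutter (s : ℕ) where
  edges : Finset (Finset (Fin s))
  antichain : ∀ e ∈ edges, ∀ f ∈ edges, e ⊆ f → e = f

namespace Clutter

variable {s : ℕ} (C : Clutter s)

/-- The edge ideal of a clutter. -/
noncomputable def edgeIdeal (K : Type*) [Field K] : Ideal (MvPolynomial (Fin s) K) :=
  Ideal.span ((fun e : Finset (Fin s) => ∏ i ∈ e, X i) '' C.edges)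

/-- A stable (independent) set of a clutter: a set of vertices containing no edge. -/
def Stable (A : Finset (Fin s)) : Prop := ∀ e ∈ C.edges, ¬ (e ⊆ A)

/-- A maximal stable set of a clutter. -/
def MaximalStable (A : Finset (Fin s)) : Prop :=
  C.Stable A ∧ ∀ B : Finset (Fin s), C.Stable B → A ⊆ B → A = B

/-- The neighbor set `N_C(A)`: all vertices `i` such that `{i} ∪ A` contains an edge. -/
noncomputable def neighborSet (A : Finset (Fin s)) : Finset (Fin s) :=
  Finset.univ.filter (fun i => ∃ e ∈ C.edges, e ⊆ insert i A)

/-- A vertex cover of a clutter: a set of vertices meeting every edge. -/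
def IsVertexCover (B : Finset (Fin s)) : Prop := ∀ e ∈ C.edges, ∃ i ∈ e, i ∈ B

/-- A minimal vertex cover: a vertex cover minimal with respect to inclusion. -/
def IsMinimalVertexCover (B : Finset (Fin s)) : Prop :=
  C.IsVertexCover B ∧ ∀ B' ⊂ B, ¬ C.IsVertexCover B'

/-- The independence number `β₀(C)`: the maximum size of a stable set. -/
noncomputable def indepNum : ℕ := sSup {n : ℕ | ∃ A : Finset (Fin s), C.Stable A ∧ A.card = n}

/-- The independent domination number `i(C)`: the minimum size of a maximal stable set. -/
noncomputable def idomNum : ℕ :=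
  sInf {n : ℕ | ∃ A : Finset (Fin s), C.MaximalStable A ∧ A.card = n}

/-- The vertex covering number `α₀(C)`: the minimum size of a vertex cover. -/
noncomputable def coverNum : ℕ :=
  sInf {n : ℕ | ∃ B : Finset (Fin s), C.IsVertexCover B ∧ B.card = n}

/-- The ideal of covers of a clutter, generated by the monomials of the minimal vertex covers. -/
noncomputable def coverIdeal (K : Type*) [Field K] : Ideal (MvPolynomial (Fin s) K) :=
  Ideal.span ((fun B : Finset (Fin s) => ∏ i ∈ B, X i) '' {B | C.IsMinimalVertexCover B})

/-- The clutter is well-covered if every maximal stable set has maximum cardinality `β₀(C)`. -/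
def WellCovered : Prop := ∀ A : Finset (Fin s), C.MaximalStable A → A.card = C.indepNum

/-- Deletion of an edge from a clutter. -/
def deleteEdge (e : Finset (Fin s)) : Clutter s :=
  ⟨C.edges.erase e, fun a ha b hb hab =>
    C.antichain a (Finset.mem_of_mem_erase ha) b (Finset.mem_of_mem_erase hb) hab⟩

/-- An edge-critical clutter: deleting any edge increases the independence number. -/
def EdgeCritical : Prop := ∀ e ∈ C.edges, C.indepNum < (C.deleteEdge e).indepNum

end Clutter

section Graphs

variable {V : Type*}

/-- The edge ideal of a simple graph. -/
noncomputable def gEdgeIdeal (K : Type*) [Field K] (G : SimpleGraph V) :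
    Ideal (MvPolynomial V K) :=
  Ideal.span {m : MvPolynomial V K | ∃ i j : V, G.Adj i j ∧ m = X i * X j}

/-- A stable (independent) set of vertices of a graph. -/
def gStable (G : SimpleGraph V) (A : Finset V) : Prop := ∀ i ∈ A, ∀ j ∈ A, ¬ G.Adj i j

/-- A maximal stable set of a graph. -/
def gMaximalStable (G : SimpleGraph V) (A : Finset V) : Prop :=
  gStable G A ∧ ∀ B : Finset V, gStable G B → A ⊆ B → A = B

/-- The independence number `β₀(G)`. -/
noncomputable def gIndepNum [Fintype V] (G : SimpleGraph V) : ℕ :=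
  sSup {n : ℕ | ∃ A : Finset V, gStable G A ∧ A.card = n}

/-- A maximum stable set: a stable set of maximum cardinality `β₀(G)`. -/
def gMaximumStable [Fintype V] (G : SimpleGraph V) (A : Finset V) : Prop :=
  gStable G A ∧ A.card = gIndepNum G

/-- The independent domination number `i(G)`: minimum size of a maximal stable set. -/
noncomputable def gIdomNum (G : SimpleGraph V) : ℕ :=
  sInf {n : ℕ | ∃ A : Finset V, gMaximalStable G A ∧ A.card = n}

/-- A well-covered graph: every maximal stable set is a maximum stable set. -/
def gWellCovered [Fintype V] (G : SimpleGraph V) : Prop :=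
  ∀ A : Finset V, gMaximalStable G A → A.card = gIndepNum G

/-- The class `W₂`: graphs with at least two vertices in which any two disjoint stable sets
are contained in two disjoint maximum stable sets. -/
def W2 [Fintype V] (G : SimpleGraph V) : Prop :=
  2 ≤ Fintype.card V ∧ ∀ A B : Finset V, gStable G A → gStable G B → Disjoint A B →
    ∃ A' B' : Finset V, gMaximumStable G A' ∧ gMaximumStable G B' ∧ Disjoint A' B' ∧
      A ⊆ A' ∧ B ⊆ B'

/-- The neighbor set of a set of vertices of a graph: all vertices adjacent to a vertex of `A`. -/
noncomputable def gNeighborSet [Fintype V] (G : SimpleGraph V) (A : Finset V) : Finset V :=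
  Finset.univ.filter (fun i => ∃ j ∈ A, G.Adj i j)

/-- A vertex cover of a graph. -/
def gIsVertexCover (G : SimpleGraph V) (B : Finset V) : Prop :=
  ∀ i j : V, G.Adj i j → i ∈ B ∨ j ∈ B

/-- A minimal vertex cover of a graph. -/
def gIsMinimalVertexCover (G : SimpleGraph V) (B : Finset V) : Prop :=
  gIsVertexCover G B ∧ ∀ B' ⊂ B, ¬ gIsVertexCover G B'

/-- An edge-critical graph: deleting any edge increases the independence number. -/
def gEdgeCritical [Fintype V] (G : SimpleGraph V) : Prop :=
  ∀ i j : V, G.Adj i j → gIndepNum G < gIndepNum (G.deleteEdges {s(i, j)})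

end Graphs

/-!
For an edge `ij` write `H = G \ (N[i] ∪ N[j])`. Adding `i` to a stable set of `H` shows
`β₀(H) + 1 ≤ β₀(G)`, and adding both `i` and `j` gives a stable set of `G \ ij`, so
`β₀(H) + 2 ≤ β₀(G \ ij)`. Conversely, a stable set of `G \ ij` that is not stable in `G` contains
`i` and `j`, and the rest of it is a stable set of `H`; hence
`β₀(G \ ij) ≤ max β₀(G) (β₀(H) + 2)`. So `β₀(G) < β₀(G \ ij)` iff `β₀(G) < β₀(H) + 2`, that is,
iff `β₀(H) = β₀(G) - 1`.
-/

open Finset SimpleGraph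

theorem gStable_iff_isIndepSet {V : Type*} {G : SimpleGraph V} {A : Finset V} :
    gStable G A ↔ G.IsIndepSet (A : Set V) :=
  ⟨fun h _ hi _ hj _ => h _ hi _ hj, fun h _ hi _ hj hij => h hi hj hij.ne hij⟩

theorem gIndepNum_eq_indepNum {V : Type*} [Fintype V] (G : SimpleGraph V) :
    gIndepNum G = G.indepNum := by
  simp only [gIndepNum, indepNum, isNIndepSet_iff, gStable_iff_isIndepSet, and_comm]

namespace SimpleGraph

variable {V : Type*} {G : SimpleGraph V}

theorem card_le_indepNum_induce [Finite V] {s : Set V} {t : Finset V} (hts : ↑t ⊆ s)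
    (ht : G.IsIndepSet t) : #t ≤ (G.induce s).indepNum := by
  have hind : (G.induce s).IsIndepSet (t.subtype (· ∈ s) : Set s) := fun a ha b hb hab =>
    ht (mem_subtype.mp ha) (mem_subtype.mp hb) (Subtype.coe_ne_coe.mpr hab)
  calc #t = #(t.subtype (· ∈ s)) := by
        rw [card_subtype, filter_true_of_mem fun v hv => hts hv]
    _ ≤ _ := hind.card_le_indepNum

theorem exists_isIndepSet_subset_card_eq_indepNum_induce (s : Set V) :
    ∃ t : Finset V, ↑t ⊆ s ∧ G.IsIndepSet t ∧ #t = (G.induce s).indepNum := by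
  obtain ⟨t, ht, hcard⟩ := (G.induce s).exists_isNIndepSet_indepNum
  refine ⟨t.map (Function.Embedding.subtype _), by simp, ?_, by rw [card_map, hcard]⟩
  rw [coe_map]
  rintro _ ⟨a, ha, rfl⟩ _ ⟨b, hb, rfl⟩ hab
  exact ht ha hb (ne_of_apply_ne _ hab)

theorem isIndepSet_insert {v : V} {s : Set V} :
    G.IsIndepSet (insert v s) ↔ G.IsIndepSet s ∧ ∀ w ∈ s, ¬G.Adj v w := by
  rw [IsIndepSet, Set.pairwise_insert]
  refine and_congr_right fun _ => forall₂_congr fun w _ => ?_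
  rw [G.adj_comm w v, and_self]
  exact ⟨fun h hvw => h hvw.ne hvw, fun h _ => h⟩

theorem IsIndepSet.of_deleteEdges {i j : V} {s : Set V}
    (hs : (G.deleteEdges {s(i, j)}).IsIndepSet s) (h : ¬(i ∈ s ∧ j ∈ s)) :
    G.IsIndepSet s := by
  intro a ha b hb hab hadj
  refine hs ha hb hab ((deleteEdges_adj ..).2 ⟨hadj, ?_⟩)
  rw [Set.mem_singleton_iff, Sym2.eq_iff]
  rintro (⟨rfl, rfl⟩ | ⟨rfl, rfl⟩)
  exacts [h ⟨ha, hb⟩, h ⟨hb, ha⟩]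

/-- The vertex set of `G \ (N[i] ∪ N[j])`. -/
def outsideClosedNbhds (G : SimpleGraph V) (i j : V) : Set V :=
  (insert i (G.neighborSet i) ∪ insert j (G.neighborSet j))ᶜ

theorem mem_outsideClosedNbhds {i j v : V} :
    v ∈ G.outsideClosedNbhds i j ↔ v ≠ i ∧ ¬G.Adj i v ∧ v ≠ j ∧ ¬G.Adj j v := by
  simp only [outsideClosedNbhds, Set.mem_compl_iff, Set.mem_union, Set.mem_insert_iff,
    mem_neighborSet]
  tauto

theorem IsIndepSet.sdiff_subset_outsideClosedNbhds {i j : V} {s : Set V}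
    (hs : (G.deleteEdges {s(i, j)}).IsIndepSet s) (hi : i ∈ s) (hj : j ∈ s) :
    s \ {i, j} ⊆ G.outsideClosedNbhds i j := by
  rintro v ⟨hv, hvij⟩
  simp only [Set.mem_insert_iff, Set.mem_singleton_iff, not_or] at hvij
  obtain ⟨hvi, hvj⟩ := hvij
  refine mem_outsideClosedNbhds.2 ⟨hvi, fun hadj => ?_, hvj, fun hadj => ?_⟩
  · refine hs hi hv (Ne.symm hvi) ((deleteEdges_adj ..).2 ⟨hadj, ?_⟩)
    simp [hvi, hvj]
  · refine hs hj hv (Ne.symm hvj) ((deleteEdges_adj ..).2 ⟨hadj, ?_⟩)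
    simp [hvi, hvj]

variable [Finite V]

theorem indepNum_induce_outsideClosedNbhds_add_one_le (i j : V) :
    (G.induce (G.outsideClosedNbhds i j)).indepNum + 1 ≤ G.indepNum := by
  obtain ⟨t, hts, ht, hcard⟩ := exists_isIndepSet_subset_card_eq_indepNum_induce
    (G := G) (G.outsideClosedNbhds i j)
  have hi : i ∉ t := fun hi => (mem_outsideClosedNbhds.1 (hts hi)).1 rfl
  have hind : G.IsIndepSet ↑(insert i t) := by
    rw [coe_insert, isIndepSet_insert]
    exact ⟨ht, fun w hw => (mem_outsideClosedNbhds.1 (hts hw)).2.1⟩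
  calc _ = #(insert i t) := by rw [card_insert_of_notMem hi, hcard]
    _ ≤ _ := hind.card_le_indepNum

theorem indepNum_induce_outsideClosedNbhds_add_two_le {i j : V} (hij : i ≠ j) :
    (G.induce (G.outsideClosedNbhds i j)).indepNum + 2 ≤
      (G.deleteEdges {s(i, j)}).indepNum := by
  obtain ⟨t, hts, ht, hcard⟩ := exists_isIndepSet_subset_card_eq_indepNum_induce
    (G := G) (G.outsideClosedNbhds i j)
  have hout : ∀ w ∈ t, w ≠ i ∧ ¬G.Adj i w ∧ w ≠ j ∧ ¬G.Adj j w := fun w hw =>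
    mem_outsideClosedNbhds.1 (hts hw)
  have hi : i ∉ insert j t := by
    simpa [hij] using fun hi => (hout i hi).1 rfl
  have hj : j ∉ t := fun hj => (hout j hj).2.2.1 rfl
  have hind : (G.deleteEdges {s(i, j)}).IsIndepSet ↑(insert i (insert j t)) := by
    simp only [coe_insert, isIndepSet_insert, Set.mem_insert_iff, deleteEdges_adj,
      Set.mem_singleton_iff, not_and, not_not]
    refine ⟨⟨ht.mono' fun a b h hab => h hab.1,
      fun w hw hadj => absurd hadj (hout w hw).2.2.2⟩, ?_⟩
    rintro w (rfl | hw) hadj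
    · rfl
    · exact absurd hadj (hout w hw).2.1
  calc _ = #(insert i (insert j t)) := by
        rw [card_insert_of_notMem hi, card_insert_of_notMem hj, hcard]
    _ ≤ _ := hind.card_le_indepNum

theorem indepNum_deleteEdges_le_max (i j : V) :
    (G.deleteEdges {s(i, j)}).indepNum ≤
      max G.indepNum ((G.induce (G.outsideClosedNbhds i j)).indepNum + 2) := by
  obtain ⟨t, ht, hcard⟩ := (G.deleteEdges {s(i, j)}).exists_isNIndepSet_indepNum
  rw [← hcard]
  by_cases hboth : i ∈ t ∧ j ∈ t
  · have hsub : ↑(t \ {i, j}) ⊆ G.outsideClosedNbhds i j := by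
      rw [coe_sdiff, coe_pair]
      exact ht.sdiff_subset_outsideClosedNbhds hboth.1 hboth.2
    have hind : G.IsIndepSet ↑(t \ {i, j}) :=
      IsIndepSet.of_deleteEdges (ht.mono (coe_subset.2 sdiff_subset)) (by simp)
    calc #t ≤ #(t \ {i, j}) + #{i, j} := card_le_card_sdiff_add_card
      _ ≤ (G.induce (G.outsideClosedNbhds i j)).indepNum + 2 :=
        add_le_add (card_le_indepNum_induce hsub hind) card_le_two
      _ ≤ _ := le_max_right _ _
  · exact (ht.of_deleteEdges hboth).card_le_indepNum.trans (le_max_left _ _)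

theorem indepNum_lt_indepNum_deleteEdges_iff {i j : V} (hij : i ≠ j) :
    G.indepNum < (G.deleteEdges {s(i, j)}).indepNum ↔
      G.indepNum < (G.induce (G.outsideClosedNbhds i j)).indepNum + 2 := by
  have hlow := indepNum_induce_outsideClosedNbhds_add_two_le (G := G) hij
  have hup := indepNum_deleteEdges_le_max (G := G) i j
  omega

end SimpleGraph

/-- A graph `G` is edge-critical if and only if for every edge `{i, j}`,
`β₀(G \ (N_G[i] ∪ N_G[j])) = β₀(G) − 1`. -/
theorem gEdgeCritical_iff {V : Type*} [Fintype V] (G : SimpleGraph V) :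
    gEdgeCritical G ↔ ∀ i j : V, G.Adj i j →
      gIndepNum (SimpleGraph.induce
          ((insert i (G.neighborSet i) ∪ insert j (G.neighborSet j))ᶜ) G) =
        gIndepNum G - 1 := by
  simp only [gEdgeCritical, gIndepNum_eq_indepNum]
  refine forall₂_congr fun i j => forall_congr' fun hij => ?_
  have hle := G.indepNum_induce_outsideClosedNbhds_add_one_le i j
  rw [indepNum_lt_indepNum_deleteEdges_iff hij.ne]
  unfold outsideClosedNbhds at hle ⊢
  omega
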